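/- Let T_p > 0 and β > 0. Suppose H : ℝ² × ℝ × ℝ → ℝ satisfies conditions (R1)–(R2), is T_p-periodic in its time argument (i.e., H((z, t + T_p), u, p) = H((z, t), u, p) for all z, t, u, p), and satisfies the monotonicity condition H((z,t), r, p) − H((z,t), s, p) ≥ β·(r − s) for all (z,t), p and all r ≥ s. Let u, v : ℝ² → ℝ be bounded, uniformly continuous, T_p-periodic in the time variable (u(z, t + T_p) = u(z, t) and v(z, t + T_p) = v(z, t) for all (z,t)), with u a viscosity subsolution and v a viscosity supersolution on ℝ × ℝ of ∂_t f + H((z,t), f, ∂_z f) = 0. Then u(z, t) ≤ v(z, t) for all (z, t) ∈ ℝ × ℝ. -/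

import Mathlib

/-!
Doubling of variables. For `ε > 0` the function (`doubling u v ε⁻² ε²`)
`Φ (x, y) = u x - v y - |x - y|² / ε² - ε² (|x|² + |y|²)` (Euclidean norms) tends to `-∞` because
`u` and `v` are bounded, so it attains its maximum at some `(a, b)`. Testing the subsolution at `a`
and the supersolution at `b` with the quadratic penalties, the two gradients in `z` differ only by
`2ε² (a₁ + b₁)`, so monotonicity in `u` and (R2) give
`β (u a - v b) ≤ ω (‖a - b‖ + 2ε² |a₁ + b₁|) + 2ε² |a₂ + b₂|`.
Comparing `Φ (a, b)` with `Φ (0, 0)` shows that `|a - b|`, `ε² |a|` and `ε² |b|` are `O(ε)`, and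
comparing it with `Φ (x₀, x₀)` shows `u a - v b ≥ u x₀ - v x₀ - 2ε² |x₀|²`. Letting `ε → 0` gives
`u x₀ ≤ v x₀`.
-/

open Set Filter

/-- `u` is a viscosity subsolution of `F (y, u y, Du y) = 0` on the open set `U ⊆ ℝ²`. -/
def IsViscositySubsolnOn (F : (ℝ × ℝ) → ℝ → (ℝ × ℝ) → ℝ) (u : ℝ × ℝ → ℝ)
    (U : Set (ℝ × ℝ)) : Prop :=
  ContinuousOn u U ∧
    ∀ φ : (ℝ × ℝ) → ℝ, ContDiff ℝ 2 φ → ∀ y ∈ U,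
      IsLocalMax (fun p => u p - φ p) y →
        F y (u y) (fderiv ℝ φ y (1, 0), fderiv ℝ φ y (0, 1)) ≤ 0

/-- `u` is a viscosity supersolution of `F (y, u y, Du y) = 0` on the open set `U ⊆ ℝ²`. -/
def IsViscositySupersolnOn (F : (ℝ × ℝ) → ℝ → (ℝ × ℝ) → ℝ) (u : ℝ × ℝ → ℝ)
    (U : Set (ℝ × ℝ)) : Prop :=
  ContinuousOn u U ∧
    ∀ φ : (ℝ × ℝ) → ℝ, ContDiff ℝ 2 φ → ∀ y ∈ U,
      IsLocalMin (fun p => u p - φ p) y →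
        0 ≤ F y (u y) (fderiv ℝ φ y (1, 0), fderiv ℝ φ y (0, 1))

/-- A modulus of continuity. -/
def IsModulus (ω : ℝ → ℝ) : Prop :=
  Monotone ω ∧ ω 0 = 0 ∧ (∀ s, 0 ≤ s → 0 ≤ ω s) ∧
    Tendsto ω (nhdsWithin 0 (Ioi 0)) (nhds 0)

/-- Conditions (R1)–(R2) on a Hamiltonian `H (y, u, p)`. -/
def SatisfiesR1R2 (H : (ℝ × ℝ) → ℝ → ℝ → ℝ) : Prop :=
  UniformContinuous (fun x : (ℝ × ℝ) × ℝ × ℝ => H x.1 x.2.1 x.2.2) ∧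
    ∃ ω : ℝ → ℝ, IsModulus ω ∧
      (∀ (y₁ y₂ : ℝ × ℝ) (u p₁ p₂ : ℝ),
        |H y₁ u p₁ - H y₂ u p₂| ≤ ω (‖y₁ - y₂‖ + |p₁ - p₂|)) ∧
      (∀ (y₁ y₂ : ℝ × ℝ) (u p : ℝ),
        |H y₁ u p - H y₂ u p| ≤ ω (‖y₁ - y₂‖ * (1 + |p|)))

open Topology

section Doubling

/-- `ℝ × ℝ` carries the sup norm; the penalisations use this smooth squared Euclidean distance. -/
def sqDist (b p : ℝ × ℝ) : ℝ := (p.1 - b.1) ^ 2 + (p.2 - b.2) ^ 2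

lemma sqDist_comm (a b : ℝ × ℝ) : sqDist a b = sqDist b a := by
  unfold sqDist; ring

lemma sqDist_self (p : ℝ × ℝ) : sqDist p p = 0 := by
  simp [sqDist]

lemma sqDist_nonneg (b p : ℝ × ℝ) : 0 ≤ sqDist b p := by
  unfold sqDist; positivity

lemma norm_sub_sq_le_sqDist (b p : ℝ × ℝ) : ‖p - b‖ ^ 2 ≤ sqDist b p := by
  rw [Prod.norm_def, Prod.fst_sub, Prod.snd_sub, Real.norm_eq_abs, Real.norm_eq_abs, sqDist]
  rcases le_total |p.1 - b.1| |p.2 - b.2| with h | h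
  · rw [max_eq_right h, sq_abs]; nlinarith [sq_nonneg (p.1 - b.1)]
  · rw [max_eq_left h, sq_abs]; nlinarith [sq_nonneg (p.2 - b.2)]

lemma norm_sub_le_of_sqDist_le {b p : ℝ × ℝ} {r : ℝ} (hr : 0 ≤ r) (h : sqDist b p ≤ r ^ 2) :
    ‖p - b‖ ≤ r :=
  (pow_le_pow_iff_left₀ (norm_nonneg _) hr two_ne_zero).mp ((norm_sub_sq_le_sqDist b p).trans h)

lemma hasFDerivAt_sqDist (b a : ℝ × ℝ) :
    HasFDerivAt (sqDist b) ((2 * (a.1 - b.1)) • ContinuousLinearMap.fst ℝ ℝ ℝ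
      + (2 * (a.2 - b.2)) • ContinuousLinearMap.snd ℝ ℝ ℝ) a := by
  have h₁ := ((hasFDerivAt_fst (𝕜 := ℝ) (p := a)).sub_const b.1).pow 2
  have h₂ := ((hasFDerivAt_snd (𝕜 := ℝ) (p := a)).sub_const b.2).pow 2
  exact (h₁.add h₂).congr_fderiv (by ext <;> simp)

def penalty (K α : ℝ) (b x : ℝ × ℝ) : ℝ := K * sqDist b x + α * sqDist 0 x

lemma hasFDerivAt_penalty (K α : ℝ) (b a : ℝ × ℝ) :
    HasFDerivAt (penalty K α b) ((2 * K * (a.1 - b.1) + 2 * α * a.1) • ContinuousLinearMap.fst ℝ ℝ ℝ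
      + (2 * K * (a.2 - b.2) + 2 * α * a.2) • ContinuousLinearMap.snd ℝ ℝ ℝ) a :=
  (((hasFDerivAt_sqDist b a).const_mul K).add
    ((hasFDerivAt_sqDist 0 a).const_mul α)).congr_fderiv (by ext <;> simp <;> ring)

lemma contDiff_penalty (K α : ℝ) (b : ℝ × ℝ) : ContDiff ℝ 2 (penalty K α b) := by
  unfold penalty sqDist; fun_prop

variable {F : (ℝ × ℝ) → ℝ → (ℝ × ℝ) → ℝ} {u v : ℝ × ℝ → ℝ} {K α : ℝ} {a b : ℝ × ℝ}

lemma IsViscositySubsolnOn.le_zero_of_isMaxOn_sub_penalty (hsub : IsViscositySubsolnOn F u univ)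
    (hmax : ∀ x, u x - penalty K α b x ≤ u a - penalty K α b a) :
    F a (u a) (2 * K * (a.1 - b.1) + 2 * α * a.1, 2 * K * (a.2 - b.2) + 2 * α * a.2) ≤ 0 := by
  have h := hsub.2 _ (contDiff_penalty K α b) a (mem_univ a) (Eventually.of_forall hmax)
  simpa [(hasFDerivAt_penalty K α b a).fderiv] using h

lemma IsViscositySupersolnOn.nonneg_of_isMinOn_add_penalty (hsup : IsViscositySupersolnOn F v univ)
    (hmin : ∀ y, v b + penalty K α a b ≤ v y + penalty K α a y) :
    0 ≤ F b (v b) (-(2 * K * (b.1 - a.1) + 2 * α * b.1), -(2 * K * (b.2 - a.2) + 2 * α * b.2)) := by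
  have hmin' : IsLocalMin (fun y => v y - -penalty K α a y) b :=
    Eventually.of_forall fun y => by simpa [← sub_eq_add_neg, sub_neg_eq_add] using hmin y
  have h := hsup.2 _ (contDiff_penalty K α a).neg b (mem_univ b) hmin'
  rw [(hasFDerivAt_penalty K α a b).fun_neg.fderiv] at h
  simpa using h

lemma exists_forall_le_of_le_sub_mul_norm_sq {E : Type*} [NormedAddCommGroup E] [ProperSpace E]
    {f : E → ℝ} (hf : Continuous f) {c A : ℝ} (hA : 0 < A) (hle : ∀ w, f w ≤ c - A * ‖w‖ ^ 2) :
    ∃ w, ∀ y, f y ≤ f w := by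
  have hquad : Tendsto (fun r : ℝ => c - A * r ^ 2) atTop atBot :=
    tendsto_atBot_add_const_left _ c
      (tendsto_neg_atTop_atBot.comp ((tendsto_pow_atTop two_ne_zero).const_mul_atTop hA))
  exact hf.exists_forall_ge (tendsto_atBot_mono hle (hquad.comp tendsto_norm_cocompact_atTop))

def doubling (u v : ℝ × ℝ → ℝ) (K α : ℝ) (x y : ℝ × ℝ) : ℝ :=
  u x - v y - penalty K α y x - α * sqDist 0 y

lemma exists_isMax_doubling {M : ℝ} (hu : ∀ p, |u p| ≤ M) (hv : ∀ p, |v p| ≤ M)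
    (huc : Continuous u) (hvc : Continuous v) (hK : 0 ≤ K) (hα : 0 < α) :
    ∃ a b, ∀ x y, doubling u v K α x y ≤ doubling u v K α a b := by
  have hle : ∀ w : (ℝ × ℝ) × (ℝ × ℝ), doubling u v K α w.1 w.2 ≤ 2 * M - α * ‖w‖ ^ 2 := by
    intro w
    have hnorm : ‖w‖ ^ 2 ≤ sqDist 0 w.1 + sqDist 0 w.2 := by
      have h₁ := norm_sub_sq_le_sqDist 0 w.1
      have h₂ := norm_sub_sq_le_sqDist 0 w.2
      rw [sub_zero] at h₁ h₂
      rw [Prod.norm_def]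
      rcases max_choice ‖w.1‖ ‖w.2‖ with h | h <;> rw [h] <;>
        linarith [sqDist_nonneg 0 w.1, sqDist_nonneg 0 w.2]
    have := mul_le_mul_of_nonneg_left hnorm hα.le
    have := mul_nonneg hK (sqDist_nonneg w.2 w.1)
    unfold doubling penalty
    linarith [(abs_le.mp (hu w.1)).2, (abs_le.mp (hv w.2)).1]
  obtain ⟨w, hw⟩ := exists_forall_le_of_le_sub_mul_norm_sq
    (f := fun w : (ℝ × ℝ) × (ℝ × ℝ) => doubling u v K α w.1 w.2)
    (by unfold doubling penalty sqDist; fun_prop) hα hle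
  exact ⟨w.1, w.2, fun x y => hw (x, y)⟩

section MaxPoint

variable (hmax : ∀ x y, doubling u v K α x y ≤ doubling u v K α a b)
include hmax

lemma penalty_add_le_of_isMax_doubling {M : ℝ} (hu : ∀ p, |u p| ≤ M) (hv : ∀ p, |v p| ≤ M) :
    penalty K α b a + α * sqDist 0 b ≤ 4 * M := by
  have h := hmax 0 0
  simp only [doubling, penalty, sqDist, Prod.fst_zero, Prod.snd_zero] at h ⊢
  linarith [(abs_le.mp (hu a)).2, (abs_le.mp (hv b)).1, (abs_le.mp (hu 0)).1, (abs_le.mp (hv 0)).2]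

lemma sub_le_of_isMax_doubling (hK : 0 ≤ K) (hα : 0 ≤ α) (x₀ : ℝ × ℝ) :
    u x₀ - v x₀ - 2 * α * sqDist 0 x₀ ≤ u a - v b := by
  have h := hmax x₀ x₀
  simp only [doubling, penalty, sqDist_self, mul_zero, zero_add] at h
  linarith [mul_nonneg hK (sqDist_nonneg b a), mul_nonneg hα (sqDist_nonneg 0 a),
    mul_nonneg hα (sqDist_nonneg 0 b)]

lemma mul_sub_le_of_isMax_doubling {H : (ℝ × ℝ) → ℝ → ℝ → ℝ} {β : ℝ} {ω : ℝ → ℝ}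
    (hmono : ∀ (y : ℝ × ℝ) (p r s : ℝ), s ≤ r → β * (r - s) ≤ H y r p - H y s p)
    (hω : ∀ (y₁ y₂ : ℝ × ℝ) (u p₁ p₂ : ℝ), |H y₁ u p₁ - H y₂ u p₂| ≤ ω (‖y₁ - y₂‖ + |p₁ - p₂|))
    (hsub : IsViscositySubsolnOn (fun y q p => p.2 + H y q p.1) u univ)
    (hsup : IsViscositySupersolnOn (fun y q p => p.2 + H y q p.1) v univ) (hle : v b ≤ u a) :
    β * (u a - v b) ≤ ω (‖a - b‖ + |2 * α * (a.1 + b.1)|) - 2 * α * (a.2 + b.2) := by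
  have hsub' := hsub.le_zero_of_isMaxOn_sub_penalty (K := K) (α := α) (b := b) (a := a)
    fun x => by have := hmax x b; unfold doubling at this; linarith
  have hsup' := hsup.nonneg_of_isMinOn_add_penalty (K := K) (α := α) (a := a) (b := b)
    fun y => by
      have := hmax a y
      simp only [doubling, penalty, sqDist_comm y a, sqDist_comm b a] at this ⊢
      linarith
  have hH := (abs_le.mp (hω a b (v b) (2 * K * (a.1 - b.1) + 2 * α * a.1)
    (-(2 * K * (b.1 - a.1) + 2 * α * b.1)))).1
  rw [show 2 * K * (a.1 - b.1) + 2 * α * a.1 - -(2 * K * (b.1 - a.1) + 2 * α * b.1)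
    = 2 * α * (a.1 + b.1) by ring] at hH
  linarith [hmono a (2 * K * (a.1 - b.1) + 2 * α * a.1) (u a) (v b) hle]

end MaxPoint

lemma norm_sub_le_and_sq_mul_norm_le_of_isMax_doubling {R ε : ℝ} (hR : 0 ≤ R) (hε : 0 < ε)
    (hu : ∀ p, |u p| ≤ R ^ 2) (hv : ∀ p, |v p| ≤ R ^ 2)
    (hmax : ∀ x y, doubling u v (ε ^ 2)⁻¹ (ε ^ 2) x y ≤ doubling u v (ε ^ 2)⁻¹ (ε ^ 2) a b) :
    ‖a - b‖ ≤ 2 * R * ε ∧ ε ^ 2 * ‖a‖ ≤ 2 * R * ε ∧ ε ^ 2 * ‖b‖ ≤ 2 * R * ε := by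
  have h := penalty_add_le_of_isMax_doubling hmax hu hv
  unfold penalty at h
  have hε2 : 0 < ε ^ 2 := by positivity
  have hab : (ε ^ 2)⁻¹ * sqDist b a ≤ 4 * R ^ 2 := by
    linarith [mul_nonneg hε2.le (sqDist_nonneg 0 a), mul_nonneg hε2.le (sqDist_nonneg 0 b)]
  have hscaled : ∀ p, ε ^ 2 * sqDist 0 p ≤ 4 * R ^ 2 → ε ^ 2 * ‖p‖ ≤ 2 * R * ε := by
    intro p hp
    have hnorm := norm_sub_sq_le_sqDist 0 p
    rw [sub_zero] at hnorm
    have : ε * ‖p‖ ≤ 2 * R :=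
      (pow_le_pow_iff_left₀ (by positivity) (by positivity) two_ne_zero).mp
        (by nlinarith [mul_le_mul_of_nonneg_left hnorm hε2.le])
    nlinarith
  refine ⟨norm_sub_le_of_sqDist_le (by positivity) ?_, hscaled a ?_, hscaled b ?_⟩
  · rw [inv_mul_le_iff₀ hε2] at hab; linarith
  · linarith [mul_nonneg (inv_nonneg.mpr hε2.le) (sqDist_nonneg b a),
      mul_nonneg hε2.le (sqDist_nonneg 0 b)]
  · linarith [mul_nonneg (inv_nonneg.mpr hε2.le) (sqDist_nonneg b a),
      mul_nonneg hε2.le (sqDist_nonneg 0 a)]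

lemma mul_sub_le_modulus_add_of_viscosity {H : (ℝ × ℝ) → ℝ → ℝ → ℝ} {β : ℝ} {ω : ℝ → ℝ}
    {R ε : ℝ} (hβ : 0 ≤ β) (hωmono : Monotone ω) (hωnonneg : ∀ s, 0 ≤ s → 0 ≤ ω s)
    (hmono : ∀ (y : ℝ × ℝ) (p r s : ℝ), s ≤ r → β * (r - s) ≤ H y r p - H y s p)
    (hω : ∀ (y₁ y₂ : ℝ × ℝ) (u p₁ p₂ : ℝ), |H y₁ u p₁ - H y₂ u p₂| ≤ ω (‖y₁ - y₂‖ + |p₁ - p₂|))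
    (hsub : IsViscositySubsolnOn (fun y q p => p.2 + H y q p.1) u univ)
    (hsup : IsViscositySupersolnOn (fun y q p => p.2 + H y q p.1) v univ)
    (hR : 0 ≤ R) (hu : ∀ p, |u p| ≤ R ^ 2) (hv : ∀ p, |v p| ≤ R ^ 2) (x₀ : ℝ × ℝ) (hε : 0 < ε) :
    β * (u x₀ - v x₀ - 2 * ε ^ 2 * sqDist 0 x₀) ≤ ω (10 * R * ε) + 8 * R * ε := by
  have hε2 : 0 < ε ^ 2 := by positivity
  obtain ⟨a, b, hmax⟩ := exists_isMax_doubling hu hv (continuousOn_univ.mp hsub.1)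
    (continuousOn_univ.mp hsup.1) (inv_nonneg.mpr hε2.le) hε2
  have hgap := mul_le_mul_of_nonneg_left
    (sub_le_of_isMax_doubling hmax (inv_nonneg.mpr hε2.le) hε2.le x₀) hβ
  obtain ⟨hab, ha, hb⟩ := norm_sub_le_and_sq_mul_norm_le_of_isMax_doubling hR hε hu hv hmax
  have hω₀ : 0 ≤ ω (10 * R * ε) := hωnonneg _ (by positivity)
  rcases lt_or_ge (u a) (v b) with hlt | hle
  · linarith [mul_nonpos_of_nonneg_of_nonpos hβ (sub_nonpos.mpr hlt.le), mul_nonneg hR hε.le]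
  have habs : ∀ i : ℝ × ℝ → ℝ, (∀ p, |i p| ≤ ‖p‖) → |2 * ε ^ 2 * (i a + i b)| ≤ 8 * R * ε := by
    intro i hi
    rw [abs_mul, abs_of_pos (by positivity : (0 : ℝ) < 2 * ε ^ 2)]
    nlinarith [abs_add_le (i a) (i b), hi a, hi b]
  have h₁ := habs Prod.fst fun p => by simpa using norm_fst_le p
  have h₂ := habs Prod.snd fun p => by simpa using norm_snd_le p
  have hωle : ω (‖a - b‖ + |2 * ε ^ 2 * (a.1 + b.1)|) ≤ ω (10 * R * ε) := hωmono (by linarith)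
  linarith [mul_sub_le_of_isMax_doubling hmax hmono hω hsub hsup hle,
    neg_abs_le (2 * ε ^ 2 * (a.2 + b.2))]

lemma exists_pos_sq_bound {u v : ℝ × ℝ → ℝ} (hu : ∃ M, ∀ p, |u p| ≤ M) (hv : ∃ M, ∀ p, |v p| ≤ M) :
    ∃ R > 0, (∀ p, |u p| ≤ R ^ 2) ∧ ∀ p, |v p| ≤ R ^ 2 := by
  obtain ⟨Mu, hMu⟩ := hu
  obtain ⟨Mv, hMv⟩ := hv
  refine ⟨|Mu| + |Mv| + 1, by positivity, fun p => ?_, fun p => ?_⟩ <;>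
    nlinarith [hMu p, hMv p, le_abs_self Mu, le_abs_self Mv, abs_nonneg Mu, abs_nonneg Mv]

end Doubling

theorem stmt_7_general (β : ℝ) (hβ : 0 < β)
    (H : (ℝ × ℝ) → ℝ → ℝ → ℝ) (hH : SatisfiesR1R2 H)
    (hmono : ∀ (y : ℝ × ℝ) (p r s : ℝ), s ≤ r → β * (r - s) ≤ H y r p - H y s p)
    (u v : ℝ × ℝ → ℝ)
    (hub : ∃ M, ∀ p, |u p| ≤ M) (hvb : ∃ M, ∀ p, |v p| ≤ M)
    (hsub : IsViscositySubsolnOn (fun y q p => p.2 + H y q p.1) u univ)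
    (hsup : IsViscositySupersolnOn (fun y q p => p.2 + H y q p.1) v univ) :
    ∀ z t : ℝ, u (z, t) ≤ v (z, t) := by
  obtain ⟨-, ω, ⟨hωmono, -, hωnonneg, hωlim⟩, hω, -⟩ := hH
  obtain ⟨R, hR, hu, hv⟩ := exists_pos_sq_bound hub hvb
  intro z t
  have hscale : Tendsto (fun ε : ℝ => 10 * R * ε) (𝓝[>] 0) (𝓝[>] 0) := by
    refine tendsto_nhdsWithin_iff.mpr ⟨tendsto_nhdsWithin_of_tendsto_nhds ?_,
      eventually_mem_nhdsWithin.mono fun ε hε => mul_pos (by positivity : (0 : ℝ) < 10 * R) hε⟩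
    simpa using (continuous_const_mul (10 * R)).tendsto 0
  have hpoly : Tendsto (fun ε => 8 * R * ε + β * (2 * ε ^ 2 * sqDist 0 (z, t))) (𝓝[>] 0) (𝓝 0) := by
    refine tendsto_nhdsWithin_of_tendsto_nhds ?_
    simpa using (show Continuous fun ε : ℝ => 8 * R * ε + β * (2 * ε ^ 2 * sqDist 0 (z, t)) by
      fun_prop).tendsto 0
  have hβσ : β * (u (z, t) - v (z, t)) ≤ 0 := by
    refine ge_of_tendsto (by simpa using (hωlim.comp hscale).add hpoly)
      (eventually_mem_nhdsWithin.mono fun ε hε => ?_)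
    have := mul_sub_le_modulus_add_of_viscosity hβ.le hωmono hωnonneg hmono hω hsub hsup hR.le hu hv
      (z, t) hε
    linarith
  exact sub_nonpos.mp (nonpos_of_mul_nonpos_right hβσ hβ)

/-- Theorem A.6 (Comparison theorem, periodic form): for a `T_p`-periodic Hamiltonian `H`
satisfying (R1)–(R2) and `β`-monotonicity with `β > 0`, any bounded uniformly continuous
`T_p`-periodic viscosity subsolution `u` and supersolution `v` of
`∂_t f + H((z,t), f, ∂_z f) = 0` on `ℝ × ℝ` satisfy `u ≤ v` everywhere. -/
theorem stmt_7 (Tp β : ℝ) (hTp : 0 < Tp) (hβ : 0 < β)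
    (H : (ℝ × ℝ) → ℝ → ℝ → ℝ) (hH : SatisfiesR1R2 H)
    (hper : ∀ (z t uu p : ℝ), H (z, t + Tp) uu p = H (z, t) uu p)
    (hmono : ∀ (y : ℝ × ℝ) (p r s : ℝ), s ≤ r → β * (r - s) ≤ H y r p - H y s p)
    (u v : ℝ × ℝ → ℝ)
    (hub : ∃ M, ∀ p, |u p| ≤ M) (hvb : ∃ M, ∀ p, |v p| ≤ M)
    (huc : UniformContinuous u) (hvc : UniformContinuous v)
    (huper : ∀ z t, u (z, t + Tp) = u (z, t)) (hvper : ∀ z t, v (z, t + Tp) = v (z, t))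
    (hsub : IsViscositySubsolnOn (fun y q p => p.2 + H y q p.1) u univ)
    (hsup : IsViscositySupersolnOn (fun y q p => p.2 + H y q p.1) v univ) :
    ∀ z t : ℝ, u (z, t) ≤ v (z, t) :=
  stmt_7_general β hβ H hH hmono u v hub hvb hsub hsup
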